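/- arXiv:2111.11072 — 6 statements merged into one kernel-verified Lean document; each statement's English description precedes it below -/
import Mathlib

section
/- Let F be a field, T ⊆ F a finite set of size n, and s, d, m positive integers with d < sn. For any function f : T^m → F_{<s}[z_1,...,z_m], there exists at most one polynomial P ∈ F[x_1,...,x_m] of total degree at most d such that the encoding Enc^(s)(P), defined by Enc^(s)(P)(a) = P(a+z) mod ⟨z⟩^s, differs from f on fewer than (1/2)(1 - d/(sn)) fraction of the points of T^m. -/
open MvPolynomial Classical

/-- The shift `P(z + a)` of a multivariate polynomial. -/
noncomputable def mshift {F : Type*} [CommRing F] {m : ℕ} (a : Fin m → F)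
    (P : MvPolynomial (Fin m) F) : MvPolynomial (Fin m) F :=
  MvPolynomial.bind₁ (fun i => MvPolynomial.X i + MvPolynomial.C (a i)) P

/-- Two polynomials agree modulo the ideal `⟨z⟩^s` generated by monomials of total degree
`s`, i.e. they have the same coefficients in all degrees `< s`. -/
def truncEq {F : Type*} [CommRing F] {m : ℕ} (s : ℕ)
    (R S : MvPolynomial (Fin m) F) : Prop :=
  ∀ e : Fin m →₀ ℕ, (e.sum fun _ k => k) < s → MvPolynomial.coeff e R = MvPolynomial.coeff e S

/-!
Multiplicity Schwartz–Zippel: if `P ≠ 0` has total degree `D`, the multiplicities of `P` at the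
points of `T^m` sum to at most `D·|T|^(m-1)`. Induct on `m`, writing `P = ∑_{j ≤ t} P_j(z) y^j`
with `P_t ≠ 0`. For `a ∈ T^(m-1)` pick a monomial `z^e` of least degree in `P_t(a + z)`, so
`|e| = mult_a P_t`. The coefficient of `z^e` in `P(y, a + z)` is a univariate polynomial of
degree `t`, and its root multiplicity at `b` plus `|e|` bounds the multiplicity of `P` at `(b, a)`.
Summing over `b` and `a` and using `deg P_t + t ≤ D` closes the induction.

If the encodings of `P ≠ Q` both disagree with `f` on fewer than `(1 - d/(sn))/2 · n^m` points,
then `P - Q` vanishes to order `s` at more than `d/(sn) · n^m` points, against the bound above.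
-/

open Finset

section

variable {R σ : Type*} [CommRing R] {m : ℕ}

lemma Finsupp.degree_cons (c : ℕ) (e : Fin m →₀ ℕ) :
    (Finsupp.cons c e).degree = c + e.degree :=
  Finsupp.sum_cons m e c

lemma Fintype.sum_piFinset_const_succ {α M : Type*} [AddCommMonoid M] (T : Finset α)
    (g : (Fin (m + 1) → α) → M) :
    ∑ x ∈ Fintype.piFinset (fun _ : Fin (m + 1) => T), g x =
      ∑ b ∈ T, ∑ a ∈ Fintype.piFinset (fun _ : Fin m => T), g (Fin.cons b a) := by
  have h := Finset.filter_piFinset_eq_map_consEquiv (fun _ : Fin (m + 1) => T) fun _ => True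
  rw [filter_true, filter_true] at h
  rw [h, sum_map, sum_product]
  rfl

lemma Polynomial.sum_rootMultiplicity_le_natDegree [IsDomain R] (p : Polynomial R)
    (T : Finset R) : ∑ b ∈ T, p.rootMultiplicity b ≤ p.natDegree :=
  calc ∑ b ∈ T, p.rootMultiplicity b = ∑ b ∈ T, p.roots.count b := by
        simp [Polynomial.count_roots]
    _ ≤ ∑ b ∈ T ∪ p.roots.toFinset, p.roots.count b :=
        sum_le_sum_of_subset subset_union_left
    _ = Multiset.card p.roots :=
        Multiset.sum_count_eq_card fun _ hb => mem_union_right _ (Multiset.mem_toFinset.2 hb)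
    _ ≤ p.natDegree := Polynomial.card_roots' p

lemma Polynomial.coeff_taylor_rootMultiplicity_ne_zero {p : Polynomial R} (hp : p ≠ 0) (b : R) :
    (Polynomial.taylor b p).coeff (p.rootMultiplicity b) ≠ 0 := by
  rw [Polynomial.rootMultiplicity_eq_natTrailingDegree, ← Polynomial.taylor_apply]
  exact Polynomial.coeff_natTrailingDegree_ne_zero.2 (mt (Polynomial.taylor_eq_zero _ _).1 hp)

noncomputable def coeffSlice (e : σ →₀ ℕ) (q : Polynomial (MvPolynomial σ R)) :
    Polynomial R :=
  q.sum fun j r => Polynomial.monomial j (coeff e r)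

lemma coeff_coeffSlice (e : σ →₀ ℕ) (q : Polynomial (MvPolynomial σ R)) (j : ℕ) :
    (coeffSlice e q).coeff j = coeff e (q.coeff j) := by
  rw [coeffSlice, Polynomial.sum_def, Polynomial.finsetSum_coeff]
  simp_rw [Polynomial.coeff_monomial]
  rw [Finset.sum_ite_eq']
  split_ifs with hj
  · rfl
  · rw [Polynomial.notMem_support_iff.1 hj, coeff_zero]

lemma coeffSlice_monomial (e : σ →₀ ℕ) (n : ℕ) (r : MvPolynomial σ R) :
    coeffSlice e (Polynomial.monomial n r) = Polynomial.monomial n (coeff e r) := by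
  ext j
  rw [coeff_coeffSlice, Polynomial.coeff_monomial, Polynomial.coeff_monomial]
  split_ifs <;> simp

lemma coeffSlice_add (e : σ →₀ ℕ) (p q : Polynomial (MvPolynomial σ R)) :
    coeffSlice e (p + q) = coeffSlice e p + coeffSlice e q := by
  ext j
  simp only [coeff_coeffSlice, Polynomial.coeff_add, coeff_add]

lemma coeffSlice_taylor (e : σ →₀ ℕ) (b : R) (q : Polynomial (MvPolynomial σ R)) :
    coeffSlice e (Polynomial.taylor (C b) q) = Polynomial.taylor b (coeffSlice e q) := by
  ext k
  induction q using Polynomial.induction_on' with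
  | add p q hp hq =>
    rw [map_add, coeffSlice_add, Polynomial.coeff_add, hp, hq, coeffSlice_add, map_add,
      Polynomial.coeff_add]
  | monomial n r =>
    have hpow : (Polynomial.X + Polynomial.C (C b) : Polynomial (MvPolynomial σ R)) ^ n =
        ((Polynomial.X + Polynomial.C b) ^ n).map C := by
      simp [Polynomial.map_pow]
    rw [coeff_coeffSlice, coeffSlice_monomial, Polynomial.taylor_monomial,
      Polynomial.taylor_monomial, hpow, Polynomial.coeff_C_mul, Polynomial.coeff_C_mul,
      Polynomial.coeff_map, mul_comm r, MvPolynomial.coeff_C_mul, mul_comm]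

lemma mshift_mshift (a b : Fin m → R) (P : MvPolynomial (Fin m) R) :
    mshift a (mshift b P) = mshift (a + b) P := by
  simp only [mshift, bind₁_bind₁, map_add, bind₁_X_right, bind₁_C_right, Pi.add_apply,
    add_assoc]

lemma mshift_zero (P : MvPolynomial (Fin m) R) : mshift 0 P = P := by
  simp [mshift]

lemma mshift_eq_zero_iff {a : Fin m → R} {P : MvPolynomial (Fin m) R} :
    mshift a P = 0 ↔ P = 0 := by
  refine ⟨fun h => ?_, fun h => by simp [h, mshift]⟩
  have := congrArg (mshift (-a)) h
  rwa [mshift_mshift, neg_add_cancel, mshift_zero, mshift, map_zero] at this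

noncomputable def mshiftHom (a : Fin m → R) :
    MvPolynomial (Fin m) R →+* MvPolynomial (Fin m) R :=
  (bind₁ fun i => X i + C (a i)).toRingHom

lemma mshiftHom_apply (a : Fin m → R) (P : MvPolynomial (Fin m) R) :
    mshiftHom a P = mshift a P :=
  rfl

lemma finSuccEquiv_mshift_cons (b : R) (a : Fin m → R) (P : MvPolynomial (Fin (m + 1)) R) :
    finSuccEquiv R m (mshift (Fin.cons b a) P) =
      Polynomial.taylor (C b) ((finSuccEquiv R m P).map (mshiftHom a)) := by
  induction P using MvPolynomial.induction_on with
  | C r => simp [mshift, mshiftHom, finSuccEquiv_apply]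
  | add p q hp hq => simp only [mshift, map_add] at *; rw [hp, hq, Polynomial.map_add, map_add]
  | mul_X p i hp =>
    simp only [mshift, map_mul, Polynomial.map_mul, Polynomial.taylor_mul] at *
    rw [hp, bind₁_X_right]
    congr 1
    induction i using Fin.cases with
    | zero => simp [finSuccEquiv_apply, Polynomial.taylor_X]
    | succ k => simp [finSuccEquiv_apply, mshiftHom, Polynomial.taylor_C]

noncomputable def multAt (a : Fin m → R) (P : MvPolynomial (Fin m) R) : ℕ∞ :=
  MvPowerSeries.order (mshift a P : MvPowerSeries (Fin m) R)

lemma multAt_le {a : Fin m → R} {P : MvPolynomial (Fin m) R} {e : Fin m →₀ ℕ}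
    (he : coeff e (mshift a P) ≠ 0) : multAt a P ≤ e.degree :=
  MvPowerSeries.order_le (by rwa [MvPolynomial.coeff_coe])

lemma exists_coeff_ne_zero_degree_eq_multAt (a : Fin m → R) {P : MvPolynomial (Fin m) R}
    (hP : P ≠ 0) :
    ∃ e : Fin m →₀ ℕ, coeff e (mshift a P) ≠ 0 ∧ (e.degree : ℕ∞) = multAt a P := by
  have hshift : (mshift a P : MvPowerSeries (Fin m) R) ≠ 0 := by
    rwa [Ne, MvPolynomial.coe_eq_zero_iff, mshift_eq_zero_iff]
  simpa only [MvPolynomial.coeff_coe, multAt] using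
    MvPowerSeries.exists_coeff_ne_zero_and_order (MvPowerSeries.ne_zero_iff_order_finite.mp hshift)

lemma le_multAt_sub_of_truncEq {s : ℕ} {a : Fin m → R} {P Q : MvPolynomial (Fin m) R}
    (h : truncEq s (mshift a P) (mshift a Q)) : (s : ℕ∞) ≤ multAt a (P - Q) :=
  MvPowerSeries.nat_le_order fun e he => by
    rw [MvPolynomial.coeff_coe, mshift, map_sub, coeff_sub, sub_eq_zero]
    exact h e he

lemma leadingCoeff_finSuccEquiv_ne_zero {P : MvPolynomial (Fin (m + 1)) R} (hP : P ≠ 0) :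
    (finSuccEquiv R m P).leadingCoeff ≠ 0 := by
  rwa [Ne, Polynomial.leadingCoeff_eq_zero, EmbeddingLike.map_eq_zero_iff]

lemma sum_multAt_cons_le [IsDomain R] (T : Finset R) (a : Fin m → R)
    {P : MvPolynomial (Fin (m + 1)) R} (hP : P ≠ 0) :
    ∑ b ∈ T, multAt (Fin.cons b a) P ≤
      #T * multAt a (finSuccEquiv R m P).leadingCoeff + (finSuccEquiv R m P).natDegree := by
  set p := finSuccEquiv R m P
  have hlead : p.leadingCoeff ≠ 0 := leadingCoeff_finSuccEquiv_ne_zero hP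
  obtain ⟨e, he, hdeg⟩ := exists_coeff_ne_zero_degree_eq_multAt a hlead
  -- `q y = [z^e] P(y, a + z)`
  set q := coeffSlice e (p.map (mshiftHom a))
  have hq_coeff (j : ℕ) : q.coeff j = coeff e (mshift a (p.coeff j)) := by
    rw [coeff_coeffSlice, Polynomial.coeff_map, mshiftHom_apply]
  have hq : q ≠ 0 := fun h => he <| by
    rw [Polynomial.leadingCoeff, ← hq_coeff, h, Polynomial.coeff_zero]
  have hq_natDegree : q.natDegree ≤ p.natDegree :=
    Polynomial.natDegree_le_iff_coeff_eq_zero.2 fun j hj => by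
      rw [hq_coeff, Polynomial.coeff_eq_zero_of_natDegree_lt hj, mshift, map_zero, coeff_zero]
  have hfiber (b : R) : multAt (Fin.cons b a) P ≤ q.rootMultiplicity b + e.degree := by
    refine (multAt_le (e := Finsupp.cons (q.rootMultiplicity b) e) ?_).trans ?_
    · rw [← finSuccEquiv_coeff_coeff, finSuccEquiv_mshift_cons, ← coeff_coeffSlice,
        coeffSlice_taylor]
      exact Polynomial.coeff_taylor_rootMultiplicity_ne_zero hq b
    · rw [Finsupp.degree_cons, Nat.cast_add]
  have hroots : ((∑ b ∈ T, q.rootMultiplicity b : ℕ) : ℕ∞) ≤ p.natDegree := by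
    exact_mod_cast (q.sum_rootMultiplicity_le_natDegree T).trans hq_natDegree
  calc ∑ b ∈ T, multAt (Fin.cons b a) P
      ≤ ∑ b ∈ T, ((q.rootMultiplicity b : ℕ∞) + e.degree) :=
        sum_le_sum fun b _ => hfiber b
    _ = ((∑ b ∈ T, q.rootMultiplicity b : ℕ) : ℕ∞) + #T * multAt a p.leadingCoeff := by
      rw [sum_add_distrib, sum_const, nsmul_eq_mul, hdeg, Nat.cast_sum]
    _ ≤ #T * multAt a p.leadingCoeff + p.natDegree := by
      rw [add_comm]
      exact add_le_add_right hroots _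

theorem sum_multAt_mul_card_le [IsDomain R] (T : Finset R) :
    ∀ {m : ℕ} {P : MvPolynomial (Fin m) R}, P ≠ 0 →
      (∑ a ∈ Fintype.piFinset (fun _ : Fin m => T), multAt a P) * #T ≤ P.totalDegree * #T ^ m
  | 0, P, hP => by
    have hmult (a : Fin 0 → R) : multAt a P = 0 := by
      obtain ⟨e, -, hdeg⟩ := exists_coeff_ne_zero_degree_eq_multAt a hP
      rw [← hdeg, Subsingleton.elim e 0, map_zero, Nat.cast_zero]
    simp [hmult]
  | m + 1, P, hP => by
    set p := finSuccEquiv R m P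
    have hlead : p.leadingCoeff ≠ 0 := leadingCoeff_finSuccEquiv_ne_zero hP
    have hdeg : ((p.leadingCoeff.totalDegree + p.natDegree : ℕ) : ℕ∞) ≤ P.totalDegree :=
      Nat.cast_le.2 (totalDegree_coeff_finSuccEquiv_add_le P p.natDegree hlead)
    calc (∑ x ∈ Fintype.piFinset (fun _ => T), multAt x P) * #T
        = (∑ a ∈ Fintype.piFinset (fun _ => T), ∑ b ∈ T, multAt (Fin.cons b a) P) * #T := by
          rw [Fintype.sum_piFinset_const_succ, sum_comm]
      _ ≤ (∑ a ∈ Fintype.piFinset (fun _ => T),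
            (#T * multAt a p.leadingCoeff + p.natDegree)) * #T := by
          gcongr with a
          exact sum_multAt_cons_le T a hP
      _ = #T * ((∑ a ∈ Fintype.piFinset (fun _ => T), multAt a p.leadingCoeff) * #T)
            + p.natDegree * #T ^ (m + 1) := by
          rw [sum_add_distrib, sum_const, Fintype.card_piFinset_const, ← mul_sum, nsmul_eq_mul]
          push_cast
          ring
      _ ≤ #T * (p.leadingCoeff.totalDegree * #T ^ m) + p.natDegree * #T ^ (m + 1) := by
          gcongr #T * ?_ + _
          exact sum_multAt_mul_card_le T hlead
      _ = ((p.leadingCoeff.totalDegree + p.natDegree : ℕ) : ℕ∞) * #T ^ (m + 1) := by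
          push_cast
          ring
      _ ≤ P.totalDegree * #T ^ (m + 1) := by gcongr

lemma card_filter_truncEq_mul_le [IsDomain R] (s : ℕ) (T : Finset R)
    {P Q : MvPolynomial (Fin m) R} (hPQ : P ≠ Q) :
    s * #{a ∈ Fintype.piFinset (fun _ : Fin m => T) | truncEq s (mshift a P) (mshift a Q)} * #T
      ≤ (P - Q).totalDegree * #T ^ m := by
  set S := Fintype.piFinset fun _ : Fin m => T
  set agree := {a ∈ S | truncEq s (mshift a P) (mshift a Q)}
  suffices h : ((s * #agree * #T : ℕ) : ℕ∞) ≤ (P - Q).totalDegree * #T ^ m by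
    exact_mod_cast h
  calc ((s * #agree * #T : ℕ) : ℕ∞) = (∑ _a ∈ agree, (s : ℕ∞)) * #T := by
        rw [sum_const, nsmul_eq_mul]
        push_cast
        ring
    _ ≤ (∑ a ∈ agree, multAt a (P - Q)) * #T := by
        gcongr with a ha
        exact le_multAt_sub_of_truncEq (mem_filter.1 ha).2
    _ ≤ (∑ a ∈ S, multAt a (P - Q)) * #T := by
        gcongr
        exact filter_subset _ _
    _ ≤ (P - Q).totalDegree * #T ^ m := sum_multAt_mul_card_le T (sub_ne_zero.2 hPQ)

lemma card_filter_not_truncEq_le {ι : Type*} (s : ℕ) (S : Finset ι)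
    (u v w : ι → MvPolynomial (Fin m) R) :
    #{a ∈ S | ¬truncEq s (u a) (v a)} ≤
      #{a ∈ S | ¬truncEq s (u a) (w a)} + #{a ∈ S | ¬truncEq s (v a) (w a)} := by
  refine (card_le_card fun a ha => ?_).trans (card_union_le _ _)
  have htrans : truncEq s (u a) (w a) → truncEq s (v a) (w a) → truncEq s (u a) (v a) :=
    fun huw hvw e he => (huw e he).trans (hvw e he).symm
  simp only [mem_union, mem_filter] at ha ⊢
  tauto

end

theorem unique_decoding_combinatorial_general {F : Type*} [Field F] {m s d : ℕ}
    (T : Finset F) (hdsn : d < s * T.card)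
    (f : (Fin m → F) → MvPolynomial (Fin m) F)
    (P Q : MvPolynomial (Fin m) F)
    (hPdeg : P.totalDegree ≤ d) (hQdeg : Q.totalDegree ≤ d)
    (hPf : (((Fintype.piFinset (fun _ : Fin m => T)).filter
        (fun a => ¬ truncEq s (mshift a P) (f a))).card : ℚ) <
      (1/2) * (1 - (d : ℚ) / ((s : ℚ) * T.card)) * (T.card : ℚ) ^ m)
    (hQf : (((Fintype.piFinset (fun _ : Fin m => T)).filter
        (fun a => ¬ truncEq s (mshift a Q) (f a))).card : ℚ) <
      (1/2) * (1 - (d : ℚ) / ((s : ℚ) * T.card)) * (T.card : ℚ) ^ m) :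
    P = Q := by
  by_contra hPQ
  set S := Fintype.piFinset fun _ : Fin m => T
  set agree := {a ∈ S | truncEq s (mshift a P) (mshift a Q)}
  have hcover : T.card ^ m ≤ #agree + (#{a ∈ S | ¬truncEq s (mshift a P) (f a)} +
      #{a ∈ S | ¬truncEq s (mshift a Q) (f a)}) := by
    rw [← Fintype.card_piFinset_const T m, ← card_filter_add_card_filter_not
      fun a => truncEq s (mshift a P) (mshift a Q)]
    gcongr
    exact card_filter_not_truncEq_le s S _ _ f
  have hagree : s * #agree * T.card ≤ d * T.card ^ m :=
    (card_filter_truncEq_mul_le s T hPQ).trans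
      (Nat.mul_le_mul_right _ ((totalDegree_sub P Q).trans (max_le hPdeg hQdeg)))
  have hsn : (0 : ℚ) < s * T.card := by exact_mod_cast (Nat.zero_le d).trans_lt hdsn
  have hcover' : (T.card : ℚ) ^ m ≤ #agree + (#{a ∈ S | ¬truncEq s (mshift a P) (f a)} +
      #{a ∈ S | ¬truncEq s (mshift a Q) (f a)}) := by exact_mod_cast hcover
  have hagree' : (s * #agree * T.card : ℚ) ≤ d * T.card ^ m := by exact_mod_cast hagree
  have hlow : (d : ℚ) / (s * T.card) * T.card ^ m < #agree := by linarith
  rw [div_mul_eq_mul_div, div_lt_iff₀ hsn] at hlow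
  linarith

/-- Combinatorial multiplicity Schwartz–Zippel: for a received word
`f : T^m → F_{<s}[z]` there is at most one polynomial of total degree at most `d` whose
order-`s` multiplicity encoding differs from `f` on fewer than a
`(1/2)(1 - d/(s n))` fraction of the points of `T^m`. -/
theorem unique_decoding_combinatorial {F : Type*} [Field F] {m s d : ℕ}
    (hm : 0 < m) (hs : 0 < s) (hd : 0 < d) (T : Finset F) (hdsn : d < s * T.card)
    (f : (Fin m → F) → MvPolynomial (Fin m) F)
    (P Q : MvPolynomial (Fin m) F)
    (hPdeg : P.totalDegree ≤ d) (hQdeg : Q.totalDegree ≤ d)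
    (hPf : (((Fintype.piFinset (fun _ : Fin m => T)).filter
        (fun a => ¬ truncEq s (mshift a P) (f a))).card : ℚ) <
      (1/2) * (1 - (d : ℚ) / ((s : ℚ) * T.card)) * (T.card : ℚ) ^ m)
    (hQf : (((Fintype.piFinset (fun _ : Fin m => T)).filter
        (fun a => ¬ truncEq s (mshift a Q) (f a))).card : ℚ) <
      (1/2) * (1 - (d : ℚ) / ((s : ℚ) * T.card)) * (T.card : ℚ) ^ m) :
    P = Q :=
  unique_decoding_combinatorial_general T hdsn f P Q hPdeg hQdeg hPf hQf
end

section
/- Let T ⊆ F, s : T → Z_{≥0}, N = Σ_{a∈T} s(a), D = ⌊(N+e)/2⌋ + 1, and h : T → F[z] a received word with deg h_a < s(a). Suppose Q(x,y) = B_0(x) + y·B_1(x) is a nonzero polynomial with deg(B_0) < D, deg(B_1) < D−e, satisfying Q(a+z, h_a) ≡ 0 mod z^{s(a)} for all a ∈ T. If R ∈ F[x] has degree at most e and Δ_mult^(s)(h, Enc^(s)(R)) < (1/2)(N − e), then Q(x, R(x)) is identically zero, i.e., B_0 + B_1·R = 0. -/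
open Polynomial Classical

/-- `agr sa p` is the order of agreement capped at `sa`: the minimum of `sa` and the
multiplicity of `0` as a root of `p` (equal to `sa` when `p = 0`). -/
noncomputable def agr {F : Type*} [CommRing F] (sa : ℕ) (p : Polynomial F) : ℕ :=
  if p = 0 then sa else min sa (p.rootMultiplicity 0)

/-- The pointwise multiplicity distance `s(a) − min(u_a, s(a))` where `u_a` is the order of
agreement (the largest `u` with `z^u ∣ p`). -/
noncomputable def mdist {F : Type*} [CommRing F] (sa : ℕ) (p : Polynomial F) : ℕ :=
  sa - agr sa p

/-!
Put `P = B₀ + B₁·R`, so `deg P < D`. At each `a ∈ T`, after the shift `x = a + z`,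
`P = Q(a+z, h_a) − (h_a − R(a+z))·B₁(a+z)`: the first term vanishes to order `s(a)` and the
second to order `agr (s a) (h_a − R(a+z))`, so `a` is a root of `P` of at least that
multiplicity. These orders add up to `N − Δ > (N + e)/2`, hence to at least `D > deg P`,
which forces `P = 0`.
-/

section Agreement

variable {F : Type*} [CommRing F] (sa : ℕ) (p : F[X])

theorem agr_le : agr sa p ≤ sa := by
  unfold agr
  split_ifs <;> omega

theorem agr_add_mdist : agr sa p + mdist sa p = sa := by
  have := agr_le sa p
  unfold mdist
  omega

theorem X_pow_agr_dvd : (X : F[X]) ^ agr sa p ∣ p := by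
  unfold agr
  split_ifs with hp
  · simp [hp]
  · have := pow_rootMultiplicity_dvd p 0
    rw [map_zero, sub_zero] at this
    exact (pow_dvd_pow X (min_le_right sa _)).trans this

theorem X_pow_agr_dvd_sub_mul {u : F[X]} (hu : (X : F[X]) ^ sa ∣ u) (v : F[X]) :
    (X : F[X]) ^ agr sa p ∣ u - p * v :=
  dvd_sub ((pow_dvd_pow (X : F[X]) (agr_le sa p)).trans hu) ((X_pow_agr_dvd sa p).mul_right v)

end Agreement

namespace Polynomial

theorem sum_rootMultiplicity_le_natDegree_s5 {R : Type*} [CommRing R] [IsDomain R]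
    (P : R[X]) (T : Finset R) : ∑ a ∈ T, P.rootMultiplicity a ≤ P.natDegree :=
  calc ∑ a ∈ T, P.rootMultiplicity a
      = ∑ a ∈ T, P.roots.count a := by simp only [count_roots]
    _ ≤ ∑ a ∈ T ∪ P.roots.toFinset, P.roots.count a :=
        Finset.sum_le_sum_of_subset Finset.subset_union_left
    _ = Multiset.card P.roots :=
        Multiset.sum_count_eq_card fun _ ha ↦ Finset.mem_union_right _ (Multiset.mem_toFinset.2 ha)
    _ ≤ P.natDegree := P.card_roots'

theorem eq_zero_of_degree_lt_sum_of_X_pow_dvd_comp {R : Type*} [CommRing R] [IsDomain R]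
    {P : R[X]} {T : Finset R} {m : R → ℕ}
    (hdvd : ∀ a ∈ T, X ^ m a ∣ P.comp (X + C a)) (hdeg : P.degree < (∑ a ∈ T, m a : ℕ)) :
    P = 0 := by
  by_contra hP
  have hm : ∑ a ∈ T, m a ≤ ∑ a ∈ T, P.rootMultiplicity a :=
    Finset.sum_le_sum fun a ha ↦ (le_rootMultiplicity_iff hP).2 (X_sub_C_pow_dvd_iff.2 (hdvd a ha))
  have := (natDegree_lt_iff_degree_lt hP).2 hdeg
  have := P.sum_rootMultiplicity_le_natDegree_s5 T
  omega

theorem degree_add_mul_lt {R : Type*} [Semiring R] {B₀ B₁ S : R[X]} {D e : ℕ}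
    (hB₀ : B₀.degree < D) (hB₁ : B₁.degree < (D - e : ℕ)) (hS : S.natDegree ≤ e) :
    (B₀ + B₁ * S).degree < D := by
  refine (degree_add_le _ _).trans_lt (max_lt hB₀ ?_)
  rcases eq_or_ne B₁ 0 with rfl | hB₁0
  · simp
  have := (natDegree_lt_iff_degree_lt hB₁0).2 hB₁
  have := natDegree_mul_le (p := B₁) (q := S)
  exact (degree_le_natDegree).trans_lt (Nat.cast_lt.2 (by omega))

end Polynomial

theorem close_polynomial_is_root_general {F : Type*} [Field F]
    (T : Finset F) (s : F → ℕ) (e N D : ℕ)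
    (hN : N = ∑ a ∈ T, s a) (hD : D = (N + e) / 2 + 1)
    (h : F → Polynomial F)
    (B0 B1 : Polynomial F)
    (hB0 : B0.degree < (D : WithBot ℕ)) (hB1 : B1.degree < ((D - e : ℕ) : WithBot ℕ))
    (hvanish : ∀ a ∈ T, (X : Polynomial F) ^ (s a) ∣
      (B0.comp (X + C a) + h a * B1.comp (X + C a)))
    (R : Polynomial F) (hR : R.natDegree ≤ e)
    (hclose : ((∑ a ∈ T, mdist (s a) (h a - R.comp (X + C a)) : ℕ) : ℚ) <
      ((N : ℚ) - (e : ℚ)) / 2) :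
    B0 + B1 * R = 0 := by
  set err : F → F[X] := fun a ↦ h a - R.comp (X + C a)
  refine eq_zero_of_degree_lt_sum_of_X_pow_dvd_comp (T := T) (m := fun a ↦ agr (s a) (err a))
    (fun a ha ↦ ?_) ((degree_add_mul_lt hB0 hB1 hR).trans_le (Nat.cast_le.2 ?_))
  · have hshift : (B0 + B1 * R).comp (X + C a) =
        (B0.comp (X + C a) + h a * B1.comp (X + C a)) - err a * B1.comp (X + C a) := by
      simp only [err, add_comp, mul_comp]
      ring
    exact hshift ▸ X_pow_agr_dvd_sub_mul _ _ (hvanish a ha) _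
  · have hsum : ∑ a ∈ T, agr (s a) (err a) + ∑ a ∈ T, mdist (s a) (err a) = N := by
      rw [← Finset.sum_add_distrib, hN]
      exact Finset.sum_congr rfl fun a _ ↦ agr_add_mdist _ _
    have hlt : 2 * ∑ a ∈ T, mdist (s a) (err a) + e < N := by
      exact_mod_cast (by linarith : (2 * ∑ a ∈ T, mdist (s a) (err a) + e : ℚ) < N)
    omega

/-- Any polynomial `R` of degree at most `e` whose encoding is within multiplicity distance
`(N - e)/2` of the received word `h` satisfies `B₀ + B₁·R = 0` for any nonzero interpolation
solution `Q(x,y) = B₀(x) + y·B₁(x)`. -/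
theorem close_polynomial_is_root {F : Type*} [Field F]
    (T : Finset F) (s : F → ℕ) (e N D : ℕ)
    (hN : N = ∑ a ∈ T, s a) (hD : D = (N + e) / 2 + 1)
    (h : F → Polynomial F)
    (hdeg : ∀ a ∈ T, (h a).degree < (s a : WithBot ℕ))
    (B0 B1 : Polynomial F) (hQne : ¬ (B0 = 0 ∧ B1 = 0))
    (hB0 : B0.degree < (D : WithBot ℕ)) (hB1 : B1.degree < ((D - e : ℕ) : WithBot ℕ))
    (hvanish : ∀ a ∈ T, (X : Polynomial F) ^ (s a) ∣
      (B0.comp (X + C a) + h a * B1.comp (X + C a)))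
    (R : Polynomial F) (hR : R.natDegree ≤ e)
    (hclose : ((∑ a ∈ T, mdist (s a) (h a - R.comp (X + C a)) : ℕ) : ℚ) <
      ((N : ℚ) - (e : ℚ)) / 2) :
    B0 + B1 * R = 0 :=
  close_polynomial_is_root_general T s e N D hN hD h B0 B1 hB0 hB1 hvanish R hR hclose
end

section
/- Forney's threshold existence: Let D, d, N be positive integers, f a received word consisting of N blocks of length n over alphabet [q], c = (c_1,...,c_N) a codeword of a concatenated code whose outer code has minimum distance D and inner code has minimum distance d, and let c'_i be a closest inner codeword to block f_i. Define w(i) = min(Δ(f_i, c'_i)/(d/2), 1). If Δ(f,c) < Dd/2, then there exists θ ∈ [0,1] such that 2·|{i : w(i) ≤ θ, c'_i ≠ c_i}| + |{i : w(i) > θ}| < D. -/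
open Finset

/-!
Forney's averaging argument. Let `G θ = 2·#{i : w i ≤ θ, c' i ≠ c i} + #{i : θ < w i}`. Since the
weights lie in `(1/d)ℤ`, `G` is constant on each open cell `(j/d, (j+1)/d)` of `[0,1]`, so the mean
of `G` over `θ` is its mean over the `d` cell midpoints `(2j+1)/(2d)`. Swapping the two sums, block
`i` contributes at most `2Δ(f_i, c_i)` in total over the midpoints: if `c'_i = c_i` it counts only
the `min(2Δ(f_i, c'_i), d)` midpoints below its weight, and if `c'_i ≠ c_i` it contributes
`2d - min(2Δ(f_i, c'_i), d)`, which is at most `2Δ(f_i, c_i)` because `d ≤ Δ(f_i, c_i) + Δ(f_i, c'_i)`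
and `Δ(f_i, c'_i) ≤ Δ(f_i, c_i)`. Hence the mean of `G` is below `(2/d)·(Dd/2) = D`, and some
midpoint does the job.
-/

theorem le_hammingDist_add_hammingDist_of_ne {ι β : Type*} [Fintype ι] [DecidableEq β]
    {C : Set (ι → β)} {d : ℕ} (hC : ∀ u ∈ C, ∀ v ∈ C, u ≠ v → d ≤ hammingDist u v)
    {u v : ι → β} (hu : u ∈ C) (hv : v ∈ C) (huv : u ≠ v) (f : ι → β) :
    d ≤ hammingDist f u + hammingDist f v := by
  calc d ≤ hammingDist u v := hC u hu v hv huv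
    _ ≤ hammingDist u f + hammingDist f v := hammingDist_triangle u f v
    _ = hammingDist f u + hammingDist f v := by rw [hammingDist_comm u f]

theorem Finset.sum_card_filter_comm {α γ : Type*} (s : Finset α) (t : Finset γ)
    (p : α → γ → Prop) [∀ a b, Decidable (p a b)] :
    ∑ a ∈ s, #{b ∈ t | p a b} = ∑ b ∈ t, #{a ∈ s | p a b} := by
  simp only [card_filter]
  exact sum_comm

namespace GMD

def weight (d Δ : ℕ) : ℚ := min ((Δ : ℚ) / ((d : ℚ) / 2)) 1

def threshold (d j : ℕ) : ℚ := (2 * j + 1) / (2 * d)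

theorem threshold_nonneg (d j : ℕ) : 0 ≤ threshold d j := by
  unfold threshold
  positivity

theorem threshold_lt_one {d j : ℕ} (hj : j < d) : threshold d j < 1 := by
  have hjd : (j : ℚ) + 1 ≤ d := by exact_mod_cast hj
  rw [threshold, div_lt_one (by linarith)]
  linarith

theorem threshold_lt_weight_iff {d j : ℕ} (Δ : ℕ) (hj : j < d) :
    threshold d j < weight d Δ ↔ j < 2 * Δ := by
  have hd : (0 : ℚ) < d := by exact_mod_cast (j.zero_le.trans_lt hj)
  have hlt_div : threshold d j < (Δ : ℚ) / ((d : ℚ) / 2) ↔ (2 * j + 1 : ℚ) < 4 * Δ := by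
    rw [threshold, div_lt_div_iff₀ (by positivity) (by positivity)]
    constructor <;> intro h <;> nlinarith
  rw [weight, lt_min_iff, hlt_div, and_iff_left (threshold_lt_one hj)]
  norm_cast
  omega

theorem card_threshold_lt_weight (d Δ : ℕ) :
    #{j ∈ range d | threshold d j < weight d Δ} = min (2 * Δ) d := by
  have : {j ∈ range d | threshold d j < weight d Δ} = range (min (2 * Δ) d) := by
    ext j
    simp only [mem_filter, mem_range]
    constructor
    · rintro ⟨hj, hlt⟩
      exact lt_min ((threshold_lt_weight_iff Δ hj).mp hlt) hj
    · intro hj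
      have hjd : j < d := hj.trans_le (min_le_right _ _)
      exact ⟨hjd, (threshold_lt_weight_iff Δ hjd).mpr (hj.trans_le (min_le_left _ _))⟩
  rw [this, card_range]

theorem card_weight_le_threshold (d Δ : ℕ) :
    #{j ∈ range d | weight d Δ ≤ threshold d j} = d - min (2 * Δ) d := by
  have h := card_filter_add_card_filter_not (s := range d) (fun j => threshold d j < weight d Δ)
  simp only [not_lt, card_range, card_threshold_lt_weight] at h
  omega

/-- Block `i`'s total contribution to `G` over all midpoints, with `Δ = Δ(f_i, c'_i)`,
`A = Δ(f_i, c_i)` and `err` standing for `c'_i ≠ c_i`. -/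
theorem two_mul_card_add_card_le (d : ℕ) {Δ A : ℕ} (err : Prop) [Decidable err]
    (hΔA : Δ ≤ A) (herr : err → d ≤ A + Δ) :
    2 * #{j ∈ range d | weight d Δ ≤ threshold d j ∧ err} +
      #{j ∈ range d | threshold d j < weight d Δ} ≤ 2 * A := by
  rw [card_threshold_lt_weight]
  by_cases h : err
  · simp only [h, and_true, card_weight_le_threshold]
    have := herr h
    omega
  · simp only [h, and_false, filter_false, card_empty]
    omega

theorem exists_threshold {ι : Type*} [Fintype ι] {d D : ℕ} (Δ A : ι → ℕ) (err : ι → Prop)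
    [DecidablePred err] (hΔA : ∀ i, Δ i ≤ A i) (herr : ∀ i, err i → d ≤ A i + Δ i)
    (hsum : 2 * ∑ i, A i < d * D) :
    ∃ j < d, 2 * #{i | weight d (Δ i) ≤ threshold d j ∧ err i} +
      #{i | threshold d j < weight d (Δ i)} < D := by
  have hmean : ∑ j ∈ range d, (2 * #{i | weight d (Δ i) ≤ threshold d j ∧ err i} +
      #{i | threshold d j < weight d (Δ i)}) < ∑ _j ∈ range d, D := by
    calc ∑ j ∈ range d, (2 * #{i | weight d (Δ i) ≤ threshold d j ∧ err i} +
          #{i | threshold d j < weight d (Δ i)})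
        = ∑ i, (2 * #{j ∈ range d | weight d (Δ i) ≤ threshold d j ∧ err i} +
            #{j ∈ range d | threshold d j < weight d (Δ i)}) := by
          rw [sum_add_distrib, sum_add_distrib, ← mul_sum, ← mul_sum, sum_card_filter_comm (range d),
            sum_card_filter_comm (range d)]
      _ ≤ ∑ i, 2 * A i := sum_le_sum fun i _ => two_mul_card_add_card_le d _ (hΔA i) (herr i)
      _ < ∑ _j ∈ range d, D := by rwa [← mul_sum, sum_const, card_range, smul_eq_mul]
  obtain ⟨j, hj, hlt⟩ := exists_lt_of_sum_lt hmean
  exact ⟨j, mem_range.mp hj, hlt⟩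

end GMD

theorem forney_threshold_exists_general {N n q D d : ℕ}
    (Cin : Set (Fin n → Fin q))
    (hdist : ∀ u ∈ Cin, ∀ v ∈ Cin, u ≠ v → d ≤ hammingDist u v)
    (f c c' : Fin N → Fin n → Fin q)
    (hc : ∀ i, c i ∈ Cin) (hc' : ∀ i, c' i ∈ Cin)
    (hML : ∀ i, ∀ v ∈ Cin, hammingDist (f i) (c' i) ≤ hammingDist (f i) v)
    (w : Fin N → ℚ)
    (hw : ∀ i, w i = min ((hammingDist (f i) (c' i) : ℚ) / ((d : ℚ) / 2)) 1)
    (herr : (∑ i, (hammingDist (f i) (c i) : ℚ)) < (D : ℚ) * (d : ℚ) / 2) :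
    ∃ θ : ℚ, 0 ≤ θ ∧ θ ≤ 1 ∧
      2 * ((univ.filter fun i => w i ≤ θ ∧ c' i ≠ c i).card : ℚ) +
        ((univ.filter fun i => θ < w i).card : ℚ) < (D : ℚ) := by
  obtain rfl : w = fun i => GMD.weight d (hammingDist (f i) (c' i)) := funext hw
  have hsum : 2 * ∑ i, hammingDist (f i) (c i) < d * D := by
    have : (2 * ∑ i, hammingDist (f i) (c i) : ℚ) < d * D := by push_cast; linarith
    exact_mod_cast this
  obtain ⟨j, hj, hlt⟩ := GMD.exists_threshold (fun i => hammingDist (f i) (c' i))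
    (fun i => hammingDist (f i) (c i)) (fun i => c' i ≠ c i) (fun i => hML i (c i) (hc i))
    (fun i hi => le_hammingDist_add_hammingDist_of_ne hdist (hc i) (hc' i) (Ne.symm hi) (f i))
    hsum
  exact ⟨GMD.threshold d j, GMD.threshold_nonneg d j, (GMD.threshold_lt_one hj).le,
    by exact_mod_cast hlt⟩

/-- Forney's threshold existence for GMD decoding of concatenated codes: if the received
word is within distance `Dd/2` of a concatenated codeword, then some threshold `θ ∈ [0,1]`
satisfies `2·#{errors below θ} + #{coordinates above θ} < D`. -/
theorem forney_threshold_exists {N n q D d : ℕ}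
    (hN : 0 < N) (hD : 0 < D) (hd : 0 < d)
    (Cin : Set (Fin n → Fin q))
    (hdist : ∀ u ∈ Cin, ∀ v ∈ Cin, u ≠ v → d ≤ hammingDist u v)
    (f c c' : Fin N → Fin n → Fin q)
    (hc : ∀ i, c i ∈ Cin) (hc' : ∀ i, c' i ∈ Cin)
    (hML : ∀ i, ∀ v ∈ Cin, hammingDist (f i) (c' i) ≤ hammingDist (f i) v)
    (w : Fin N → ℚ)
    (hw : ∀ i, w i = min ((hammingDist (f i) (c' i) : ℚ) / ((d : ℚ) / 2)) 1)
    (herr : (∑ i, (hammingDist (f i) (c i) : ℚ)) < (D : ℚ) * (d : ℚ) / 2) :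
    ∃ θ : ℚ, 0 ≤ θ ∧ θ ≤ 1 ∧
      2 * ((univ.filter fun i => w i ≤ θ ∧ c' i ≠ c i).card : ℚ) +
        ((univ.filter fun i => θ < w i).card : ℚ) < (D : ℚ) :=
  forney_threshold_exists_general Cin hdist f c c' hc hc' hML w hw herr
end

section
/- Lower bound on weighted distance when agreement set is small: With the setup of the weighted univariate multiplicity decoder (T of size n, degree parameter ℓ ≤ d, r = s − ⌊(d−ℓ)/n⌋, weights w(a,i) ≤ (n/2)((s−i) − (d−ℓ)/n)), let g : T → F_{<r}[z] be a received word, R a degree-ℓ polynomial, and A = {(a,i) ∈ T×[r] : g(a) ≡ R(a+z) mod ⟨z⟩^{i+1}}. If |A| ≤ ℓ, then Γ_w^{d,ℓ,s}(g, R) ≥ (n²/2)(s − d/n). -/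
/-! Write `k_a` for the agreement order of `g a` with `R(a + z)`. Every `a ∈ T` contributes at
least `(n (s - k_a) - (d - ℓ)) / 2` to `Γ`: for `k_a < r` the weight bound makes the first entry
of the max that large, and for `k_a = r` this quantity is nonpositive because
`r = s - ⌊(d - ℓ)/n⌋`. Since `∑ k_a = |A| ≤ ℓ`, summing gives at least
`n (n s - ℓ - (d - ℓ)) / 2 = (n²/2)(s - d/n)`. -/

open Polynomial Classical

/-- `agrOrd r p` is the largest `j ∈ [r+1]` with `p ≡ 0 mod z^j`. -/
noncomputable def agrOrd {F : Type*} [CommRing F] (r : ℕ) (p : Polynomial F) : ℕ :=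
  if p = 0 then r else min r (p.rootMultiplicity 0)

/-- The weighted distance `Γ_w^{s,d,ℓ}(g, R)`, with `n = |T|`. -/
noncomputable def Gamma {F : Type*} [Field F] (T : Finset F) (n s d ℓ r : ℕ)
    (g : F → Polynomial F) (w : F → ℕ → ℕ) (R : Polynomial F) : ℚ :=
  ∑ a ∈ T,
    (if agrOrd r (g a - R.comp (X + C a)) < r then
      max ((n : ℚ) * ((s : ℚ) - (agrOrd r (g a - R.comp (X + C a)) : ℚ)) -
          ((d : ℚ) - (ℓ : ℚ)) - (w a (agrOrd r (g a - R.comp (X + C a))) : ℚ))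
        (((Finset.range (agrOrd r (g a - R.comp (X + C a)))).sup (w a) : ℕ) : ℚ)
    else (((Finset.range r).sup (w a) : ℕ) : ℚ))

section AgreementOrder

variable {R : Type*} [CommRing R]

theorem agrOrd_le (r : ℕ) (p : R[X]) : agrOrd r p ≤ r := by
  unfold agrOrd; split_ifs <;> simp

theorem card_filter_X_pow_succ_dvd_eq_agrOrd (r : ℕ) (p : R[X]) :
    ((Finset.range r).filter fun i => (X : R[X]) ^ (i + 1) ∣ p).card = agrOrd r p := by
  unfold agrOrd
  split_ifs with hp
  · simp [hp]
  · have hfilter : ((Finset.range r).filter fun i => (X : R[X]) ^ (i + 1) ∣ p)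
        = Finset.range (min r (p.rootMultiplicity 0)) := by
      ext i
      simp only [Finset.mem_filter, Finset.mem_range, lt_min_iff, Nat.lt_iff_add_one_le,
        le_rootMultiplicity_iff hp, map_zero, sub_zero]
    rw [hfilter, Finset.card_range]

theorem card_filter_product_X_pow_succ_dvd_eq_sum_agrOrd {ι : Type*} (T : Finset ι) (r : ℕ)
    (p : ι → R[X]) :
    ((T ×ˢ Finset.range r).filter fun q => (X : R[X]) ^ (q.2 + 1) ∣ p q.1).card
      = ∑ a ∈ T, agrOrd r (p a) := by
  rw [Finset.card_filter, Finset.sum_product]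
  refine Finset.sum_congr rfl fun a _ => ?_
  rw [← Finset.card_filter]
  exact card_filter_X_pow_succ_dvd_eq_agrOrd r (p a)

end AgreementOrder

section Estimates

variable {K : Type*} [Field K] [LinearOrder K] [IsStrictOrderedRing K]

theorem mul_sub_sub_div_le (n s m : ℕ) : (n : K) * (s - (s - m / n : ℕ)) ≤ m := by
  have hnat : n * (s - (s - m / n)) ≤ m :=
    (Nat.mul_le_mul_left n tsub_tsub_le).trans (Nat.mul_div_le m n)
  rw [← Nat.cast_sub (Nat.sub_le s _), ← Nat.cast_mul]
  exact_mod_cast hnat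

theorem half_slack_le_summand {n s r k : ℕ} {D : K} (w : ℕ → ℕ) (hkr : k ≤ r)
    (hslack : (n : K) * (s - r) ≤ D) (hw : k < r → (w k : K) ≤ (n * (s - k) - D) / 2) :
    (n * ((s : K) - k) - D) / 2 ≤
      if k < r then max ((n : K) * ((s : K) - k) - D - w k) (((Finset.range k).sup w : ℕ) : K)
      else (((Finset.range r).sup w : ℕ) : K) := by
  split_ifs with hk
  · linarith [le_max_left ((n : K) * ((s : K) - k) - D - w k)
      (((Finset.range k).sup w : ℕ) : K), hw hk]
  · obtain rfl : k = r := le_antisymm hkr (not_lt.mp hk)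
    linarith [(Nat.cast_nonneg ((Finset.range k).sup w) : (0 : K) ≤ _)]

theorem mul_sq_div_two_le_sum_half_slack {ι : Type*} (T : Finset ι) (k : ι → ℕ)
    {n s d ℓ : ℕ} (hn : n ≠ 0) (hT : T.card = n) (hk : ∑ a ∈ T, k a ≤ ℓ) :
    (n : K) ^ 2 / 2 * (s - d / n) ≤ ∑ a ∈ T, (n * ((s : K) - k a) - (d - ℓ)) / 2 := by
  have hkK : (n : K) * ∑ a ∈ T, (k a : K) ≤ n * ℓ := by
    gcongr
    exact_mod_cast hk
  have hnK : (n : K) ≠ 0 := Nat.cast_ne_zero.mpr hn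
  have hsum : ∑ a ∈ T, (n * ((s : K) - k a) - (d - ℓ)) / 2
      = (n * n * s - n * ∑ a ∈ T, (k a : K) - n * (d - ℓ)) / 2 := by
    rw [← Finset.sum_div, Finset.sum_sub_distrib, ← Finset.mul_sum, Finset.sum_sub_distrib,
      Finset.sum_const, Finset.sum_const, hT, nsmul_eq_mul, nsmul_eq_mul]
    ring
  have hlhs : (n : K) ^ 2 / 2 * (s - d / n) = (n * n * s - n * d) / 2 := by
    field_simp
  rw [hsum, hlhs]
  linarith

end Estimates

theorem gamma_lower_bound_small_agreement_general {F : Type*} [Field F] {n s d ℓ r : ℕ}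
    (hn : 0 < n) (hℓd : ℓ ≤ d) (hr : r = s - (d - ℓ) / n)
    (T : Finset F) (hT : T.card = n)
    (g : F → Polynomial F)
    (R : Polynomial F)
    (w : F → ℕ → ℕ)
    (hw : ∀ a ∈ T, ∀ i < r, (w a i : ℚ) ≤
      ((n : ℚ) / 2) * (((s : ℚ) - (i : ℚ)) - ((d : ℚ) - (ℓ : ℚ)) / (n : ℚ)))
    (hA : ((T ×ˢ Finset.range r).filter fun p =>
        (X : Polynomial F) ^ (p.2 + 1) ∣ (g p.1 - R.comp (X + C p.1))).card ≤ ℓ) :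
    Gamma T n s d ℓ r g w R ≥ ((n : ℚ) ^ 2 / 2) * ((s : ℚ) - (d : ℚ) / (n : ℚ)) := by
  have hslack : (n : ℚ) * (s - r) ≤ d - ℓ := by
    have := mul_sub_sub_div_le (K := ℚ) n s (d - ℓ)
    rwa [← hr, Nat.cast_sub hℓd] at this
  have hw' : ∀ a ∈ T, ∀ i < r, (w a i : ℚ) ≤ (n * ((s : ℚ) - i) - (d - ℓ)) / 2 :=
    fun a ha i hi => (hw a ha i hi).trans_eq (by field_simp)
  rw [card_filter_product_X_pow_succ_dvd_eq_sum_agrOrd T r fun a => g a - R.comp (X + C a)] at hA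
  calc (n : ℚ) ^ 2 / 2 * (s - d / n)
      ≤ ∑ a ∈ T, (n * ((s : ℚ) - agrOrd r (g a - R.comp (X + C a))) - (d - ℓ)) / 2 :=
        mul_sq_div_two_le_sum_half_slack T _ hn.ne' hT hA
    _ ≤ Gamma T n s d ℓ r g w R :=
        Finset.sum_le_sum fun a ha =>
          half_slack_le_summand (w a) (agrOrd_le r _) hslack (hw' a ha _)

/-- If the agreement set `A = {(a,i) ∈ T×[r] : g(a) ≡ R(a+z) mod z^{i+1}}` has size at
most `ℓ`, then the weighted distance is at least `(n²/2)(s − d/n)`. -/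
theorem gamma_lower_bound_small_agreement {F : Type*} [Field F] {n s d ℓ r : ℕ}
    (hn : 0 < n) (hℓd : ℓ ≤ d) (hr : r = s - (d - ℓ) / n)
    (T : Finset F) (hT : T.card = n)
    (g : F → Polynomial F) (hg : ∀ a ∈ T, (g a).degree < (r : WithBot ℕ))
    (R : Polynomial F) (hRdeg : R.natDegree ≤ ℓ)
    (w : F → ℕ → ℕ)
    (hw : ∀ a ∈ T, ∀ i < r, (w a i : ℚ) ≤
      ((n : ℚ) / 2) * (((s : ℚ) - (i : ℚ)) - ((d : ℚ) - (ℓ : ℚ)) / (n : ℚ)))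
    (hA : ((T ×ˢ Finset.range r).filter fun p =>
        (X : Polynomial F) ^ (p.2 + 1) ∣ (g p.1 - R.comp (X + C p.1))).card ≤ ℓ) :
    Gamma T n s d ℓ r g w R ≥ ((n : ℚ) ^ 2 / 2) * ((s : ℚ) - (d : ℚ) / (n : ℚ)) :=
  gamma_lower_bound_small_agreement_general hn hℓd hr T hT g R w hw hA
end

section
/- Alternate inductive Schwartz–Zippel: Let P ∈ F[x_1,...,x_m] be a nonzero polynomial of total degree at most d, and let T_1,...,T_m ⊆ F each have size n. Then the number of zeros of P on T_1 × ⋯ × T_m is at most d·n^{m−1}. -/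
open MvPolynomial Classical

open Finset in
theorem MvPolynomial.card_zeros_le_totalDegree_mul_pow {R : Type*} [CommRing R] [IsDomain R]
    {m n : ℕ} {p : MvPolynomial (Fin m) R} (hp : p ≠ 0) (S : Fin m → Finset R)
    (hS : ∀ i, #(S i) = n) :
    #{x ∈ Fintype.piFinset S | eval x p = 0} ≤ p.totalDegree * n ^ (m - 1) := by
  rcases m with _ | m
  · rw [p.eq_C_of_isEmpty] at hp ⊢
    simp [C_ne_zero.mp hp]
  rcases Nat.eq_zero_or_pos n with rfl | hn
  · simp [Fintype.piFinset_eq_empty.mpr ⟨0, card_eq_zero.mp (hS 0)⟩]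
  have hsup : (p.support.sup fun s ↦ ∑ i, (s i / #(S i) : ℚ≥0)) ≤ p.totalDegree / n :=
    Finset.sup_le fun s hs ↦ by
      simp only [hS, ← sum_div]
      gcongr
      exact_mod_cast (Finsupp.sum_fintype s _ fun _ ↦ rfl).symm.trans_le (le_totalDegree hs)
  have hsz := (schwartz_zippel_sup_sum hp S).trans hsup
  simp only [hS, prod_const, card_univ, Fintype.card_fin] at hsz
  rw [div_le_div_iff₀ (by positivity) (by positivity)] at hsz
  rw [← Nat.cast_le (α := ℚ≥0), ← mul_le_mul_iff_left₀ (show (0 : ℚ≥0) < n by positivity)]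
  push_cast
  convert hsz using 1; ring

/-- Schwartz–Zippel lemma over arbitrary grids: a nonzero `m`-variate polynomial of total
degree at most `d` has at most `d·n^{m−1}` zeros on a product set `T₁ × ⋯ × T_m` with
`|T_i| = n`. -/
theorem schwartz_zippel {F : Type*} [Field F] {m d n : ℕ}
    (P : MvPolynomial (Fin m) F) (hP : P ≠ 0) (hdeg : P.totalDegree ≤ d)
    (T : Fin m → Finset F) (hT : ∀ i, (T i).card = n) :
    ((Fintype.piFinset T).filter fun a => MvPolynomial.eval a P = 0).card ≤
      d * n ^ (m - 1) :=
  (card_zeros_le_totalDegree_mul_pow hP T hT).trans (Nat.mul_le_mul_right _ hdeg)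
end

section
/- Projection inequality relating multiplicity distances across variable splits (bivariate case): Let T_1, T_2 ⊆ F of size n, s a multiplicity parameter, f : T_1×T_2 → F_{<s}[z_1,z_2] and P ∈ F[x_1,x_2]. For each a ∈ T_1 and i ∈ [s], define f^{(i,a)} : T_2 → F_{<s−i}[z_2] by extracting the coefficient of z_1^i, and let P^{(i,a)}(x_2) = Coeff_{z_1^i}(P(a+z_1, x_2)). Then Δ_mult^{(s)}(f, Enc^{(s)}(P)) ≥ Σ_{a∈T_1} max_{i∈[s]} Δ_mult^{(s−i)}(f^{(i,a)}, Enc^{(s−i)}(P^{(i,a)})). -/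
open MvPolynomial

/-! The monomial `z₂^e` of the `z₁^i`-coefficient of `R` is the monomial `z₁^i z₂^e` of `R`, so at
every point the vanishing order of `R` is at most `i` plus that of its `z₁^i`-coefficient. Summing
over `b`, maximising over `i` and summing over `a` gives the inequality. -/

/-- The shift `P(a + z₁, b + z₂)` of a bivariate polynomial (variable `0` is `z₁`). -/
noncomputable def shift2 {F : Type*} [CommRing F] (a b : F)
    (P : MvPolynomial (Fin 2) F) : MvPolynomial (Fin 2) F :=
  MvPolynomial.bind₁ (fun j => MvPolynomial.X j + MvPolynomial.C (![a, b] j)) P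

/-- Extraction of the coefficient of `z₁^i` from a bivariate polynomial, as a polynomial
in the remaining variable. -/
noncomputable def extract {F : Type*} [CommRing F] (i : ℕ)
    (R : MvPolynomial (Fin 2) F) : MvPolynomial (Fin 1) F :=
  Polynomial.coeff (MvPolynomial.finSuccEquiv F 1 R) i

/-- `dminM s R`: the minimum of `s` and the lowest degree of a nonzero monomial of `R`
(equal to `s` when `R = 0`). -/
noncomputable def dminM {F : Type*} [CommRing F] {m : ℕ} (s : ℕ)
    (R : MvPolynomial (Fin m) F) : ℕ :=
  sInf {k : ℕ | k = s ∨ ∃ e : Fin m →₀ ℕ, (e.sum fun _ j => j) = k ∧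
    MvPolynomial.coeff e R ≠ 0}

section dminM

variable {F : Type*} [CommRing F] {m : ℕ}

lemma dminM_le_self (s : ℕ) (R : MvPolynomial (Fin m) F) : dminM s R ≤ s :=
  Nat.sInf_le (Or.inl rfl)

lemma dminM_le_degree_of_coeff_ne_zero (s : ℕ) {R : MvPolynomial (Fin m) F} {e : Fin m →₀ ℕ}
    (he : coeff e R ≠ 0) : dminM s R ≤ e.sum fun _ j => j :=
  Nat.sInf_le (Or.inr ⟨e, rfl, he⟩)

lemma dminM_eq_self_or_exists_coeff_ne_zero (s : ℕ) (R : MvPolynomial (Fin m) F) :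
    dminM s R = s ∨ ∃ e : Fin m →₀ ℕ, (e.sum fun _ j => j) = dminM s R ∧ coeff e R ≠ 0 :=
  Nat.sInf_mem (s := {k | k = s ∨ _}) ⟨s, Or.inl rfl⟩

lemma dminM_le_add_dminM_extract {s i : ℕ} (hi : i ≤ s) (R : MvPolynomial (Fin 2) F) :
    dminM s R ≤ i + dminM (s - i) (extract i R) := by
  rcases dminM_eq_self_or_exists_coeff_ne_zero (s - i) (extract i R) with h | ⟨e, he, hc⟩
  · rw [h]
    have := dminM_le_self s R
    omega
  · calc dminM s R ≤ (Finsupp.cons i e).sum fun _ j => j :=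
          dminM_le_degree_of_coeff_ne_zero s (by rwa [← finSuccEquiv_coeff_coeff])
      _ = i + dminM (s - i) (extract i R) := by rw [Finsupp.sum_cons, he]

lemma sub_dminM_extract_le_sub_dminM {s i : ℕ} (hi : i ≤ s) (R : MvPolynomial (Fin 2) F) :
    (s - i) - dminM (s - i) (extract i R) ≤ s - dminM s R := by
  have := dminM_le_add_dminM_extract hi R
  omega

end dminM

/-- Projection inequality relating multiplicity distances across a variable split
(bivariate case): the order-`s` multiplicity distance between `f` and `Enc^{(s)}(P)` on
`T₁ × T₂` is at least the sum over columns `a ∈ T₁` of the maximum over `i ∈ [s]` of the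
order-`(s−i)` multiplicity distance between the coefficient-of-`z₁^i` parts. -/
theorem projection_inequality {F : Type*} [Field F] (s : ℕ)
    (T₁ T₂ : Finset F) (f : F → F → MvPolynomial (Fin 2) F)
    (P : MvPolynomial (Fin 2) F) :
    ∑ a ∈ T₁, ∑ b ∈ T₂, (s - dminM s (f a b - shift2 a b P)) ≥
      ∑ a ∈ T₁, (Finset.range s).sup (fun i =>
        ∑ b ∈ T₂, ((s - i) - dminM (s - i) (extract i (f a b - shift2 a b P)))) :=
  Finset.sum_le_sum fun _ _ => Finset.sup_le fun _ hi => Finset.sum_le_sum fun _ _ =>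
    sub_dminM_extract_le_sub_dminM (Finset.mem_range.mp hi).le _
end
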